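/- Let Λ be the E8 root lattice realized inside Z^{1,8} as the orthogonal complement of k = -3l + e_1 + ... + e_8, let T = Hom(Λ, G_m) over an algebraically closed field, and let χ ∈ T. Fix a nodal genus-0 curve K with Pic^0(K) ≅ G_m, a point P_1 ∈ K_reg, and define P_{i+1} ∈ K_reg by P_{i+1} ~ P_i + χ(e_{i+1} - e_i) for 1 ≤ i ≤ 7 (using the degree-1 torsor identification K_reg ≅ Pic^1). Embed K in P^2 by the linear system of D = χ(l - e_1 - e_2 - e_3) + P_1 + P_2 + P_3. Then: three points P_{i_1}, P_{i_2}, P_{i_3} are collinear if and only if χ(l - e_{i_1} - e_{i_2} - e_{i_3}) = 1. -/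

import Mathlib

/-!
Measure every point against the base point by the character: the recursion makes
`P i * χ(e₀ - eᵢ)` independent of `i`.  Hence `P a * P b * P c * χ(l - e_a - e_b - e_c)` does not
depend on the triple `a, b, c`; for the triple `0, 1, 2` it is the parameter of `D`, so
`P a * P b * P c` equals that parameter exactly when `χ(l - e_a - e_b - e_c) = 1`.
-/

def lv : Fin 9 → ℤ := Pi.single 0 1

def ev (i : Fin 8) : Fin 9 → ℤ := Pi.single i.succ 1

section CharacterParameters

variable {A G : Type*} [AddCommGroup A] [CommGroup G] (χ : A →+ Additive G)

theorem eq_zero_mul_toMul_of_succ_eq {n : ℕ} {e : Fin (n + 1) → A} {P : Fin (n + 1) → G}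
    (hP : ∀ i : Fin n, P i.succ = P i.castSucc * Additive.toMul (χ (e i.succ - e i.castSucc)))
    (i : Fin (n + 1)) : P i = P 0 * Additive.toMul (χ (e i - e 0)) := by
  induction i using Fin.induction with
  | zero => simp
  | succ i ih =>
    rw [hP i, ih, mul_assoc, ← toMul_add, ← map_add, sub_add_sub_cancel']

theorem mul_mul_mul_toMul_eq {ι : Type*} (l e₀ : A) {e : ι → A} {P : ι → G} {c : G}
    (hP : ∀ i, P i = c * Additive.toMul (χ (e i - e₀))) (a b d : ι) :
    P a * P b * P d * Additive.toMul (χ (l - e a - e b - e d)) =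
      c ^ 3 * Additive.toMul (χ (l - 3 • e₀)) := by
  rw [hP a, hP b, hP d, ← Additive.ofMul.apply_eq_iff_eq]
  simp only [ofMul_mul, ofMul_pow, ofMul_toMul, map_sub, map_nsmul]
  abel

end CharacterParameters

theorem stmt13_general {k : Type*} [Field k]
    (χ : (Fin 9 → ℤ) →+ Additive kˣ)   -- a character of the E8 lattice
    (P : Fin 8 → kˣ)                    -- parameters of the points P₁,…,P₈ on K_reg ≅ kˣ
    (hP : ∀ i : Fin 7, P i.succ = P i.castSucc *
      Additive.toMul (χ (ev i.succ - ev i.castSucc)))  -- P_{i+1} ~ P_i + χ(e_{i+1} - e_i)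
    (Dparam : kˣ)                       -- the parameter product of the hyperplane divisor D
    (hD : Dparam = Additive.toMul (χ (lv - ev 0 - ev 1 - ev 2)) * (P 0 * P 1 * P 2)) :
    ∀ i₁ i₂ i₃ : Fin 8, i₁ ≠ i₂ → i₁ ≠ i₃ → i₂ ≠ i₃ →
      -- P_{i₁}, P_{i₂}, P_{i₃} are collinear in the embedding by |D| …
      ((P i₁ * P i₂ * P i₃ = Dparam) ↔
      -- … iff χ(l - e_{i₁} - e_{i₂} - e_{i₃}) = 1
        Additive.toMul (χ (lv - ev i₁ - ev i₂ - ev i₃)) = 1) := by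
  intro i₁ i₂ i₃ _ _ _
  have hPe := eq_zero_mul_toMul_of_succ_eq χ hP
  rw [hD, mul_comm (Additive.toMul _), mul_mul_mul_toMul_eq χ lv (ev 0) hPe 0 1 2,
    ← mul_mul_mul_toMul_eq χ lv (ev 0) hPe i₁ i₂ i₃, left_eq_mul]

theorem stmt13 {k : Type*} [Field k] [IsAlgClosed k] [CharZero k]
    (χ : (Fin 9 → ℤ) →+ Additive kˣ)   -- a character of the E8 lattice
    (P : Fin 8 → kˣ)                    -- parameters of the points P₁,…,P₈ on K_reg ≅ kˣ
    (hP : ∀ i : Fin 7, P i.succ = P i.castSucc *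
      Additive.toMul (χ (ev i.succ - ev i.castSucc)))  -- P_{i+1} ~ P_i + χ(e_{i+1} - e_i)
    (Dparam : kˣ)                       -- the parameter product of the hyperplane divisor D
    (hD : Dparam = Additive.toMul (χ (lv - ev 0 - ev 1 - ev 2)) * (P 0 * P 1 * P 2)) :
    ∀ i₁ i₂ i₃ : Fin 8, i₁ ≠ i₂ → i₁ ≠ i₃ → i₂ ≠ i₃ →
      -- P_{i₁}, P_{i₂}, P_{i₃} are collinear in the embedding by |D| …
      ((P i₁ * P i₂ * P i₃ = Dparam) ↔
      -- … iff χ(l - e_{i₁} - e_{i₂} - e_{i₃}) = 1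
        Additive.toMul (χ (lv - ev i₁ - ev i₂ - ev i₃)) = 1) :=
  stmt13_general χ P hP Dparam hD
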